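/- arXiv:1111.5898 — 2 statements merged into one kernel-verified Lean document; each statement's English description precedes it below -/
import Mathlib

section
/- In the KLR algebra R(n), the intertwiner φ_a satisfies x_{s_a(b)} φ_a = φ_a x_b for all 1 ≤ b ≤ n, where s_a = (a, a+1). -/
open scoped BigOperators

/-- Generators of the Khovanov–Lauda–Rouquier algebra `R(n)`:
idempotents `e(ν)` for `ν ∈ Iⁿ`, polynomial generators `x_a` (`1 ≤ a ≤ n`) and
intertwining generators `τ_l` (`1 ≤ l ≤ n−1`). -/
inductive KLRGen (I : Type) (n : ℕ) : Type where
  | e : (Fin n → I) → KLRGen I n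
  | x : Fin n → KLRGen I n
  | t : Fin (n - 1) → KLRGen I n

/-- The free algebra on the KLR generators. -/
abbrev KLRFree (k I : Type) [CommRing k] (n : ℕ) := FreeAlgebra k (KLRGen I n)

/-- The generator `e(ν)` in the free algebra. -/
def KE (k : Type) [CommRing k] {I : Type} {n : ℕ} (ν : Fin n → I) : KLRFree k I n :=
  FreeAlgebra.ι k (KLRGen.e ν)

/-- The generator `x_a` in the free algebra. -/
def KX (k : Type) [CommRing k] {I : Type} {n : ℕ} (a : Fin n) : KLRFree k I n :=
  FreeAlgebra.ι k (KLRGen.x a)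

/-- The generator `τ_l` in the free algebra. -/
def KT (k : Type) [CommRing k] {I : Type} {n : ℕ} (l : Fin (n - 1)) : KLRFree k I n :=
  FreeAlgebra.ι k (KLRGen.t l)

/-- The position `l` regarded in `Fin n`. -/
def posL {n : ℕ} (l : Fin (n - 1)) : Fin n := ⟨l.val, by have := l.isLt; omega⟩

/-- The position `l + 1` regarded in `Fin n`. -/
def posR {n : ℕ} (l : Fin (n - 1)) : Fin n := ⟨l.val + 1, by have := l.isLt; omega⟩

/-- Evaluation of a two-variable polynomial `q ∈ k[u][v]` (outer variable `u`,
inner variable `v`) at a pair of elements of a `k`-algebra `A`: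
`evalQ q a b = q(a, b)`. -/
noncomputable def evalQ {k A : Type} [CommRing k] [Ring A] [Algebra k A]
    (q : Polynomial (Polynomial k)) (u v : A) : A :=
  Polynomial.eval u (q.map (Polynomial.aeval v).toRingHom)

/-- The two-variable "divided difference" `(q(u,v) − q(w,v))/(u − w)` of a polynomial
`q ∈ k[u][v]`, evaluated at elements `u, w, v` of a `k`-algebra `A`. -/
noncomputable def QbarE {k A : Type} [CommRing k] [Ring A] [Algebra k A]
    (q : Polynomial (Polynomial k)) (u w v : A) : A :=
  ∑ p ∈ q.support, (∑ i ∈ Finset.range p, u ^ i * w ^ (p - 1 - i)) *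
    Polynomial.aeval v (q.coeff p)

/-- The defining relations of the Khovanov–Lauda–Rouquier algebra `R(n)` associated with
the family of polynomials `Q = (Q_{ij}(u,v))_{i,j ∈ I}` (Khovanov–Lauda, Rouquier). -/
inductive KLRRel (k I : Type) [CommRing k] [Fintype I] [DecidableEq I] (n : ℕ)
    (Q : I → I → Polynomial (Polynomial k)) :
    KLRFree k I n → KLRFree k I n → Prop where
  | ee (ν ν' : Fin n → I) :
      KLRRel k I n Q (KE k ν * KE k ν') (if ν = ν' then KE k ν else 0)
  | esum :
      KLRRel k I n Q (∑ ν : Fin n → I, KE k ν) 1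
  | xx (a b : Fin n) :
      KLRRel k I n Q (KX k a * KX k b) (KX k b * KX k a)
  | xe (a : Fin n) (ν : Fin n → I) :
      KLRRel k I n Q (KX k a * KE k ν) (KE k ν * KX k a)
  | te (l : Fin (n - 1)) (ν : Fin n → I) :
      KLRRel k I n Q (KT k l * KE k ν)
        (KE k (ν ∘ Equiv.swap (posL l) (posR l)) * KT k l)
  | tt (l m : Fin (n - 1)) (h : l.val + 1 < m.val ∨ m.val + 1 < l.val) :
      KLRRel k I n Q (KT k l * KT k m) (KT k m * KT k l)
  | tsq (l : Fin (n - 1)) (ν : Fin n → I) :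
      KLRRel k I n Q (KT k l * KT k l * KE k ν)
        (evalQ (Q (ν (posL l)) (ν (posR l))) (KX k (posL l)) (KX k (posR l)) * KE k ν)
  | txe (l : Fin (n - 1)) (b : Fin n) (ν : Fin n → I) :
      KLRRel k I n Q
        (KT k l * KX k b * KE k ν - KX k (Equiv.swap (posL l) (posR l) b) * KT k l * KE k ν)
        (if ν (posL l) = ν (posR l) then
          (if b = posL l then -(KE k ν) else if b = posR l then KE k ν else 0)
        else 0)
  | braid (l m : Fin (n - 1)) (hm : m.val = l.val + 1) (ν : Fin n → I) :
      KLRRel k I n Q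
        (KT k m * KT k l * KT k m * KE k ν - KT k l * KT k m * KT k l * KE k ν)
        (if ν (posL l) = ν (posR m) then
          QbarE (Q (ν (posL l)) (ν (posR l))) (KX k (posL l)) (KX k (posR m)) (KX k (posR l))
            * KE k ν
        else 0)

/-- The Khovanov–Lauda–Rouquier algebra `R(n)` over `k` associated with the Cartan datum
indexed by `I` and the polynomials `Q_{ij}`. -/
abbrev KLR (k I : Type) [CommRing k] [Fintype I] [DecidableEq I] (n : ℕ)
    (Q : I → I → Polynomial (Polynomial k)) := RingQuot (KLRRel k I n Q)

/-- The idempotent `e(ν)` in `R(n)`. -/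
noncomputable def KLR.E (k I : Type) [CommRing k] [Fintype I] [DecidableEq I] (n : ℕ)
    (Q : I → I → Polynomial (Polynomial k)) (ν : Fin n → I) : KLR k I n Q :=
  RingQuot.mkAlgHom k (KLRRel k I n Q) (KE k ν)

/-- The element `x_a` in `R(n)`. -/
noncomputable def KLR.X (k I : Type) [CommRing k] [Fintype I] [DecidableEq I] (n : ℕ)
    (Q : I → I → Polynomial (Polynomial k)) (a : Fin n) : KLR k I n Q :=
  RingQuot.mkAlgHom k (KLRRel k I n Q) (KX k a)

/-- The element `τ_l` in `R(n)`. -/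
noncomputable def KLR.T (k I : Type) [CommRing k] [Fintype I] [DecidableEq I] (n : ℕ)
    (Q : I → I → Polynomial (Polynomial k)) (l : Fin (n - 1)) : KLR k I n Q :=
  RingQuot.mkAlgHom k (KLRRel k I n Q) (KT k l)

/-- The intertwiner `φ_a` of the KLR algebra, defined by
`φ_a e(ν) = ((x_a − x_{a+1})τ_a + 1) e(ν)` if `ν_a = ν_{a+1}` and
`φ_a e(ν) = τ_a e(ν)` otherwise. -/
noncomputable def KLR.phi (k I : Type) [CommRing k] [Fintype I] [DecidableEq I] (n : ℕ)
    (Q : I → I → Polynomial (Polynomial k)) (l : Fin (n - 1)) : KLR k I n Q :=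
  ∑ ν : Fin n → I,
    (if ν (posL l) = ν (posR l) then
        (KLR.X k I n Q (posL l) - KLR.X k I n Q (posR l)) * KLR.T k I n Q l + 1
      else KLR.T k I n Q l) * KLR.E k I n Q ν

/-!
Work summand by summand in `φ_a = Σ_ν φ_a e(ν)`. If `ν_a ≠ ν_{a+1}`, then `φ_a e(ν) = τ_a e(ν)`
and the claim is the relation `τ_a x_b e(ν) = x_{s_a(b)} τ_a e(ν)`. If `ν_a = ν_{a+1}`, that
relation carries a correction `d = ∓e(ν)` (for `b = a`, resp. `b = a+1`; zero otherwise), and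
`(x_a − x_{a+1}) d = (x_{s_a(b)} − x_b) e(ν)` is exactly what the summand `e(ν)` of `φ_a e(ν)`
absorbs.
-/

theorem sub_mul_ite_neg_eq {A : Type} [Ring A] {n : ℕ} (x : Fin n → A) (i j b : Fin n) (e : A) :
    (x i - x j) * (if b = i then -e else if b = j then e else 0)
      = x (Equiv.swap i j b) * e - x b * e := by
  rcases eq_or_ne b i with rfl | hi
  · simp only [if_pos, Equiv.swap_apply_left]
    noncomm_ring
  rcases eq_or_ne b j with rfl | hj
  · simp only [if_neg hi, if_pos, Equiv.swap_apply_right]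
    noncomm_ring
  · simp [hi, hj, Equiv.swap_apply_of_ne_of_ne hi hj]

namespace KLR

variable {k I : Type} [CommRing k] [Fintype I] [DecidableEq I] {n : ℕ}
    {Q : I → I → Polynomial (Polynomial k)}

theorem X_commute_X (a b : Fin n) : Commute (X k I n Q a) (X k I n Q b) := by
  have h := RingQuot.mkAlgHom_rel k (KLRRel.xx (k := k) (I := I) (Q := Q) a b)
  simp only [map_mul] at h
  exact h

theorem X_commute_E (a : Fin n) (ν : Fin n → I) : Commute (X k I n Q a) (E k I n Q ν) := by
  have h := RingQuot.mkAlgHom_rel k (KLRRel.xe (k := k) (Q := Q) a ν)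
  simp only [map_mul] at h
  exact h

theorem T_mul_X_mul_E (l : Fin (n - 1)) (b : Fin n) (ν : Fin n → I) :
    T k I n Q l * X k I n Q b * E k I n Q ν
      = X k I n Q (Equiv.swap (posL l) (posR l) b) * T k I n Q l * E k I n Q ν
        + if ν (posL l) = ν (posR l) then
            (if b = posL l then -E k I n Q ν else if b = posR l then E k I n Q ν else 0)
          else 0 := by
  have h := RingQuot.mkAlgHom_rel k (KLRRel.txe (Q := Q) l b ν)
  simp only [map_sub, map_mul, apply_ite (RingQuot.mkAlgHom k (KLRRel k I n Q)), map_neg,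
    map_zero] at h
  exact sub_eq_iff_eq_add'.mp h

theorem X_swap_mul_T_mul_E_of_ne (l : Fin (n - 1)) (b : Fin n) {ν : Fin n → I}
    (hν : ν (posL l) ≠ ν (posR l)) :
    X k I n Q (Equiv.swap (posL l) (posR l) b) * (T k I n Q l * E k I n Q ν)
      = T k I n Q l * E k I n Q ν * X k I n Q b := by
  have htx := T_mul_X_mul_E (Q := Q) l b ν
  rw [if_neg hν, add_zero] at htx
  rw [← mul_assoc, ← htx, mul_assoc, (X_commute_E b ν).eq, mul_assoc]

theorem X_swap_mul_phi_mul_E_of_eq (l : Fin (n - 1)) (b : Fin n) {ν : Fin n → I}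
    (hν : ν (posL l) = ν (posR l)) :
    X k I n Q (Equiv.swap (posL l) (posR l) b)
        * (((X k I n Q (posL l) - X k I n Q (posR l)) * T k I n Q l + 1) * E k I n Q ν)
      = ((X k I n Q (posL l) - X k I n Q (posR l)) * T k I n Q l + 1) * E k I n Q ν
        * X k I n Q b := by
  set x := X k I n Q
  set e := E k I n Q ν
  set d : KLR k I n Q := if b = posL l then -e else if b = posR l then e else 0
  have hd : (x (posL l) - x (posR l)) * d = x (Equiv.swap (posL l) (posR l) b) * e - x b * e :=
    sub_mul_ite_neg_eq x _ _ b e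
  have hcomm : Commute (x (Equiv.swap (posL l) (posR l) b)) (x (posL l) - x (posR l)) :=
    (X_commute_X _ _).sub_right (X_commute_X _ _)
  set t := T k I n Q l
  set y := x (Equiv.swap (posL l) (posR l) b)
  set z := x (posL l) - x (posR l)
  have htx : t * x b * e = y * t * e + d := by
    simpa only [if_pos hν] using T_mul_X_mul_E (Q := Q) l b ν
  calc y * ((z * t + 1) * e)
      = z * (y * t * e) + y * e := by
        rw [add_mul, one_mul, mul_add, ← mul_assoc y, ← mul_assoc y, hcomm.eq]
        noncomm_ring
    _ = z * (t * x b * e) + (y * e - z * d) := by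
        rw [htx]
        noncomm_ring
    _ = z * t * (e * x b) + x b * e := by
        rw [hd, mul_assoc t, (X_commute_E b ν).eq]
        noncomm_ring
    _ = (z * t + 1) * e * x b := by
        rw [(X_commute_E b ν).eq]
        noncomm_ring

end KLR

theorem KLR.x_phi_general
    (k I : Type) [CommRing k] [Fintype I] [DecidableEq I] (n : ℕ)
    (Q : I → I → Polynomial (Polynomial k))
    (l : Fin (n - 1)) (b : Fin n) :
    KLR.X k I n Q (Equiv.swap (posL l) (posR l) b) * KLR.phi k I n Q l
      = KLR.phi k I n Q l * KLR.X k I n Q b := by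
  rw [KLR.phi, Finset.mul_sum, Finset.sum_mul]
  refine Finset.sum_congr rfl fun ν _ => ?_
  by_cases hν : ν (posL l) = ν (posR l)
  · simpa only [if_pos hν] using KLR.X_swap_mul_phi_mul_E_of_eq l b hν
  · simpa only [if_neg hν] using KLR.X_swap_mul_T_mul_E_of_ne l b hν

/-- **The intertwiner permutes the polynomial generators.**  In the KLR algebra `R(n)`,
the intertwiner `φ_a` satisfies `x_{s_a(b)} φ_a = φ_a x_b` for all `1 ≤ b ≤ n`, where
`s_a = (a, a+1)`. -/
theorem KLR.x_phi
    (k I : Type) [CommRing k] [Fintype I] [DecidableEq I] (n : ℕ)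
    (Q : I → I → Polynomial (Polynomial k))
    (hQdiag : ∀ i : I, Q i i = 0)
    (hQsymm : ∀ i j : I, Q i j
      = evalQ (A := Polynomial (Polynomial k)) (Q j i) (Polynomial.C Polynomial.X)
          Polynomial.X)
    (l : Fin (n - 1)) (b : Fin n) :
    KLR.X k I n Q (Equiv.swap (posL l) (posR l) b) * KLR.phi k I n Q l
      = KLR.phi k I n Q l * KLR.X k I n Q b :=
  KLR.x_phi_general k I n Q l b
end

section
/- In the KLR algebra R(n), the intertwiners satisfy the braid relation φ_a φ_{a+1} φ_a = φ_{a+1} φ_a φ_{a+1} for 1 ≤ a ≤ n−2. -/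
open scoped BigOperators

/-!
Since `∑ ν e(ν) = 1`, it suffices to prove the relation on every `z` with `e(ν) z = z`. On such
a `z` the intertwiner `φ_a` acts as `τ_a` if `ν_a ≠ ν_{a+1}` and as `(x_a - x_{a+1}) τ_a + 1`
otherwise, and it intertwines polynomials: `φ_a x_p z = x_{s_a p} φ_a z`. Expanding both sides
according to the pattern of equalities among `ν_a, ν_{a+1}, ν_{a+2}` reduces everything to the
braid relation of the `τ`'s. When `ν_a = ν_{a+2} ≠ ν_{a+1}`, its correction term
`(x_a - x_{a+2}) Q̄` is the difference `Q_{ij}(x_a, x_{a+1}) - Q_{ji}(x_{a+1}, x_{a+2})` of the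
two quadratic terms `τ² e(ν)`, by the symmetry of `Q`; when all three entries agree, `Q_{ii} = 0`
kills both `τ²` and the correction, and the remaining terms match once the `x`'s are commuted.
-/

section EvalQ

open Polynomial

variable {k A B : Type} [CommRing k] [Ring A] [Algebra k A] [Ring B] [Algebra k B]

theorem commute_aeval_of_commute {u v : A} (h : Commute u v) (p : k[X]) :
    Commute u (aeval v p) := by
  rw [aeval_eq_smeval]
  exact (smeval_commute_left k p h.symm).symm

theorem map_evalQ (f : A →ₐ[k] B) (q : k[X][X]) (u v : A) :
    f (evalQ q u v) = evalQ q (f u) (f v) := by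
  simp only [evalQ, eval_map, aeval_algHom]
  exact hom_eval₂ q _ f.toRingHom u

theorem map_QbarE (f : A →ₐ[k] B) (q : k[X][X]) (u w v : A) :
    f (QbarE q u w v) = QbarE q (f u) (f w) (f v) := by
  simp only [QbarE, map_sum, map_mul, map_pow, aeval_algHom, AlgHom.comp_apply]

@[simp]
theorem evalQ_zero (u v : A) : evalQ (0 : k[X][X]) u v = 0 := by
  simp [evalQ]

@[simp]
theorem QbarE_zero (u w v : A) : QbarE (0 : k[X][X]) u w v = 0 := by
  simp [QbarE]

theorem evalQ_eq_sum (q : k[X][X]) {u v : A} (h : Commute u v) :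
    evalQ q u v = ∑ p ∈ q.support, u ^ p * aeval v (q.coeff p) := by
  rw [evalQ, eval_eq_sum, sum_def, Finset.sum_subset (support_map_subset _ _)]
  · refine Finset.sum_congr rfl fun p _ => ?_
    rw [coeff_map]
    exact ((commute_aeval_of_commute h _).symm.pow_right p).eq
  · intro p _ hp
    rw [notMem_support_iff.mp hp, zero_mul]

theorem sub_mul_QbarE (q : k[X][X]) {u w v : A} (huw : Commute u w) (hu : Commute u v)
    (hw : Commute w v) : (u - w) * QbarE q u w v = evalQ q u v - evalQ q w v := by
  rw [evalQ_eq_sum q hu, evalQ_eq_sum q hw, QbarE, Finset.mul_sum, ← Finset.sum_sub_distrib]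
  refine Finset.sum_congr rfl fun p _ => ?_
  rw [← mul_assoc, huw.mul_geom_sum₂ p, sub_mul]

theorem evalQ_flip (q : k[X][X]) {u v : A} (h : Commute u v) :
    evalQ (evalQ (A := k[X][X]) q (C X) X) u v = evalQ q v u := by
  let ev : k[X][X] →ₐ[k] A :=
    eval₂AlgHom (aeval v) u fun c => (commute_aeval_of_commute h c).symm
  have hev : ∀ r, ev r = evalQ r u v := fun r => by
    simp [ev, evalQ, eval_map]
  rw [← hev, map_evalQ]
  simp [ev]

end EvalQ

namespace KLR

variable {k I : Type} [CommRing k] [Fintype I] [DecidableEq I] {n : ℕ}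
  {Q : I → I → Polynomial (Polynomial k)}

local notation "𝐞" => KLR.E k I n Q
local notation "𝐱" => KLR.X k I n Q
local notation "𝛕" => KLR.T k I n Q
local notation "𝛗" => KLR.phi k I n Q

theorem E_mul_E (ν ν' : Fin n → I) : 𝐞 ν * 𝐞 ν' = if ν = ν' then 𝐞 ν else 0 := by
  simpa only [KLR.E, map_mul, apply_ite (RingQuot.mkAlgHom k _), map_zero] using
    RingQuot.mkAlgHom_rel k (KLRRel.ee (Q := Q) ν ν')

theorem sum_E : ∑ ν, 𝐞 ν = 1 := by
  simpa only [KLR.E, map_sum, map_one] using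
    RingQuot.mkAlgHom_rel k (KLRRel.esum (k := k) (n := n) (Q := Q))

theorem X_commute_X_s10 (p q : Fin n) : Commute (𝐱 p) (𝐱 q) := by
  simpa only [KLR.X, commute_iff_eq, map_mul] using
    RingQuot.mkAlgHom_rel k (KLRRel.xx (Q := Q) p q)

theorem X_commute_E_s10 (p : Fin n) (ν : Fin n → I) : Commute (𝐱 p) (𝐞 ν) := by
  simpa only [KLR.E, KLR.X, commute_iff_eq, map_mul] using
    RingQuot.mkAlgHom_rel k (KLRRel.xe (Q := Q) p ν)

theorem T_mul_E (l : Fin (n - 1)) (ν : Fin n → I) :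
    𝛕 l * 𝐞 ν = 𝐞 (ν ∘ Equiv.swap (posL l) (posR l)) * 𝛕 l := by
  simpa only [KLR.E, KLR.T, map_mul] using RingQuot.mkAlgHom_rel k (KLRRel.te (Q := Q) l ν)

theorem T_mul_T_mul_E (l : Fin (n - 1)) (ν : Fin n → I) :
    𝛕 l * 𝛕 l * 𝐞 ν
      = evalQ (Q (ν (posL l)) (ν (posR l))) (𝐱 (posL l)) (𝐱 (posR l)) * 𝐞 ν := by
  simpa only [KLR.E, KLR.X, KLR.T, map_mul, map_evalQ] using
    RingQuot.mkAlgHom_rel k (KLRRel.tsq (Q := Q) l ν)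

theorem T_mul_X_mul_E_sub (l : Fin (n - 1)) (b : Fin n) (ν : Fin n → I) :
    𝛕 l * 𝐱 b * 𝐞 ν - 𝐱 (Equiv.swap (posL l) (posR l) b) * 𝛕 l * 𝐞 ν
      = if ν (posL l) = ν (posR l) then
          (if b = posL l then -𝐞 ν else if b = posR l then 𝐞 ν else 0)
        else 0 := by
  simpa only [KLR.E, KLR.X, KLR.T, map_sub, map_mul, apply_ite (RingQuot.mkAlgHom k _), map_neg,
    map_zero] using RingQuot.mkAlgHom_rel k (KLRRel.txe (Q := Q) l b ν)

theorem T_braid_mul_E_sub (l m : Fin (n - 1)) (hm : m.val = l.val + 1) (ν : Fin n → I) :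
    𝛕 m * 𝛕 l * 𝛕 m * 𝐞 ν - 𝛕 l * 𝛕 m * 𝛕 l * 𝐞 ν
      = if ν (posL l) = ν (posR m) then
          QbarE (Q (ν (posL l)) (ν (posR l))) (𝐱 (posL l)) (𝐱 (posR m)) (𝐱 (posR l)) * 𝐞 ν
        else 0 := by
  simpa only [KLR.E, KLR.X, KLR.T, map_sub, map_mul, apply_ite (RingQuot.mkAlgHom k _),
    map_QbarE, map_zero] using RingQuot.mkAlgHom_rel k (KLRRel.braid (Q := Q) l m hm ν)

section Weight

variable {ν : Fin n → I} {z : KLR k I n Q}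

theorem E_mul_mul_of_commute {f : KLR k I n Q} (hf : Commute f (𝐞 ν)) (hz : 𝐞 ν * z = z) :
    𝐞 ν * (f * z) = f * z := by
  rw [← mul_assoc, ← hf.eq, mul_assoc, hz]

theorem E_mul_T_mul {l : Fin (n - 1)} {a b : Fin n} (ha : posL l = a) (hb : posR l = b)
    (hz : 𝐞 ν * z = z) : 𝐞 (ν ∘ Equiv.swap a b) * (𝛕 l * z) = 𝛕 l * z := by
  subst ha hb
  rw [← mul_assoc, ← T_mul_E, mul_assoc, hz]

theorem E_mul_T_mul_of_eq {l : Fin (n - 1)} {a b : Fin n} (ha : posL l = a) (hb : posR l = b)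
    (hν : ν a = ν b) (hz : 𝐞 ν * z = z) : 𝐞 ν * (𝛕 l * z) = 𝛕 l * z := by
  have h := E_mul_T_mul ha hb hz
  rwa [show ν ∘ Equiv.swap a b = ν from funext (Equiv.apply_swap_eq_self hν)] at h

theorem T_mul_X_mul (l : Fin (n - 1)) (p : Fin n) (hz : 𝐞 ν * z = z) :
    𝛕 l * (𝐱 p * z) = 𝐱 (Equiv.swap (posL l) (posR l) p) * (𝛕 l * z)
      + if ν (posL l) = ν (posR l) then
          (if p = posL l then -z else if p = posR l then z else 0)
        else 0 := by
  have h := congrArg (· * z) (sub_eq_iff_eq_add.mp (T_mul_X_mul_E_sub l p ν))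
  simp only [add_mul, mul_assoc, ite_mul, zero_mul, hz] at h
  -- `neg_mul` needs explicit arguments: the `Neg` and `Mul` instances of the `RingQuot` come from
  -- different ring structures on the free algebra and only unify after unfolding.
  rw [h, add_comm, neg_mul (𝐞 ν) z, hz]

theorem T_mul_T_mul {l : Fin (n - 1)} {a b : Fin n} (ha : posL l = a) (hb : posR l = b)
    (hz : 𝐞 ν * z = z) : 𝛕 l * (𝛕 l * z) = evalQ (Q (ν a) (ν b)) (𝐱 a) (𝐱 b) * z := by
  subst ha hb
  simpa only [mul_assoc, hz] using congrArg (· * z) (T_mul_T_mul_E l ν)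

theorem T_braid_mul {l m : Fin (n - 1)} {a b c : Fin n} (hm : m.val = l.val + 1)
    (ha : posL l = a) (hb : posR l = b) (hc : posR m = c) (hz : 𝐞 ν * z = z) :
    𝛕 m * (𝛕 l * (𝛕 m * z)) = 𝛕 l * (𝛕 m * (𝛕 l * z))
      + if ν a = ν c then QbarE (Q (ν a) (ν b)) (𝐱 a) (𝐱 c) (𝐱 b) * z else 0 := by
  subst ha hb hc
  have h := congrArg (· * z) (sub_eq_iff_eq_add.mp (T_braid_mul_E_sub l m hm ν))
  simp only [add_mul, mul_assoc, ite_mul, zero_mul, hz] at h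
  rw [h, add_comm]

theorem T_braid_mul_of_ne {l m : Fin (n - 1)} {a b c : Fin n} (hm : m.val = l.val + 1)
    (ha : posL l = a) (hb : posR l = b) (hc : posR m = c) (hz : 𝐞 ν * z = z)
    (hik : ν a ≠ ν c) : 𝛕 m * (𝛕 l * (𝛕 m * z)) = 𝛕 l * (𝛕 m * (𝛕 l * z)) := by
  rw [T_braid_mul hm ha hb hc hz, if_neg hik, add_zero]

theorem phi_mul_E (l : Fin (n - 1)) (ν : Fin n → I) :
    𝛗 l * 𝐞 ν = (if ν (posL l) = ν (posR l) then
        (𝐱 (posL l) - 𝐱 (posR l)) * 𝛕 l + 1 else 𝛕 l) * 𝐞 ν := by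
  rw [KLR.phi, Finset.sum_mul, Finset.sum_eq_single ν]
  · rw [mul_assoc, E_mul_E, if_pos rfl]
  · intro μ _ hμ
    rw [mul_assoc, E_mul_E, if_neg hμ, mul_zero]
  · simp

theorem phi_mul_of_eq {l : Fin (n - 1)} {a b : Fin n} (ha : posL l = a) (hb : posR l = b)
    (hν : ν a = ν b) (hz : 𝐞 ν * z = z) : 𝛗 l * z = (𝐱 a - 𝐱 b) * (𝛕 l * z) + z := by
  subst ha hb
  rw [← hz, ← mul_assoc, phi_mul_E, if_pos hν]
  simp only [add_mul, one_mul, mul_assoc, hz]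

theorem phi_mul_of_ne {l : Fin (n - 1)} {a b : Fin n} (ha : posL l = a) (hb : posR l = b)
    (hν : ν a ≠ ν b) (hz : 𝐞 ν * z = z) : 𝛗 l * z = 𝛕 l * z := by
  subst ha hb
  rw [← hz, ← mul_assoc, phi_mul_E, if_neg hν, mul_assoc]

theorem phi_mul_X_mul {l : Fin (n - 1)} {a b : Fin n} (ha : posL l = a) (hb : posR l = b)
    (p : Fin n) (hz : 𝐞 ν * z = z) : 𝛗 l * (𝐱 p * z) = 𝐱 (Equiv.swap a b p) * (𝛗 l * z) := by
  subst ha hb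
  have hXz := E_mul_mul_of_commute (X_commute_E_s10 p ν) hz
  by_cases hν : ν (posL l) = ν (posR l)
  · rw [phi_mul_of_eq rfl rfl hν hXz, phi_mul_of_eq rfl rfl hν hz, T_mul_X_mul l p hz, if_pos hν,
      mul_add, mul_add, ((X_commute_X_s10 _ _).sub_left (X_commute_X_s10 _ _)).left_comm, add_assoc]
    congr 1
    rcases eq_or_ne p (posL l) with rfl | h1
    · rw [if_pos rfl, Equiv.swap_apply_left, mul_neg (𝐱 _ - 𝐱 _) z, sub_mul, neg_sub,
        sub_add_cancel]
    rcases eq_or_ne p (posR l) with rfl | h2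
    · rw [if_neg h1, if_pos rfl, Equiv.swap_apply_right, sub_mul, sub_add_cancel]
    · rw [if_neg h1, if_neg h2, Equiv.swap_apply_of_ne_of_ne h1 h2, mul_zero, zero_add]
  · rw [phi_mul_of_ne rfl rfl hν hXz, phi_mul_of_ne rfl rfl hν hz, T_mul_X_mul l p hz, if_neg hν,
      add_zero]

theorem phi_mul_sub_X_mul {l : Fin (n - 1)} {a b : Fin n} (ha : posL l = a) (hb : posR l = b)
    (p q : Fin n) (hz : 𝐞 ν * z = z) :
    𝛗 l * ((𝐱 p - 𝐱 q) * z) = (𝐱 (Equiv.swap a b p) - 𝐱 (Equiv.swap a b q)) * (𝛗 l * z) := by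
  rw [sub_mul, mul_sub, phi_mul_X_mul ha hb p hz, phi_mul_X_mul ha hb q hz, sub_mul]

theorem phi_mul_T_mul_of_eq {l : Fin (n - 1)} {a b : Fin n} (ha : posL l = a)
    (hb : posR l = b) (hν : ν a = ν b) (hQ : Q (ν a) (ν a) = 0) (hz : 𝐞 ν * z = z) :
    𝛗 l * (𝛕 l * z) = 𝛕 l * z := by
  rw [phi_mul_of_eq ha hb hν (E_mul_T_mul_of_eq ha hb hν hz), T_mul_T_mul ha hb hz, ← hν, hQ,
    evalQ_zero, zero_mul, mul_zero, zero_add]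

end Weight

section Adjacent

variable {l m : Fin (n - 1)} {a b c : Fin n} {ν : Fin n → I} {z : KLR k I n Q}

theorem adjacent_positions (hm : m.val = l.val + 1) (ha : posL l = a) (hb : posR l = b)
    (hc : posR m = c) : posL m = b ∧ Equiv.swap a b c = c ∧ Equiv.swap b c a = a := by
  subst ha hb hc
  refine ⟨Fin.ext (by simp [posL, posR, hm]), Equiv.swap_apply_of_ne_of_ne ?_ ?_,
    Equiv.swap_apply_of_ne_of_ne ?_ ?_⟩ <;> simp [posL, posR, Fin.ext_iff, hm] <;> omega

theorem phi_braid_mul_of_ne_of_ne_of_ne (hm : m.val = l.val + 1) (ha : posL l = a)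
    (hb : posR l = b) (hc : posR m = c) (hz : 𝐞 ν * z = z)
    (hij : ν a ≠ ν b) (hjk : ν b ≠ ν c) (hik : ν a ≠ ν c) :
    𝛗 l * (𝛗 m * (𝛗 l * z)) = 𝛗 m * (𝛗 l * (𝛗 m * z)) := by
  obtain ⟨hb', hsc, hsa⟩ := adjacent_positions hm ha hb hc
  have hl := E_mul_T_mul ha hb hz
  have hm' := E_mul_T_mul hb' hc hz
  rw [phi_mul_of_ne ha hb hij hz, phi_mul_of_ne hb' hc (by simp [hsc, hik]) hl,
    phi_mul_of_ne ha hb (by simp [hsc, hsa, hjk]) (E_mul_T_mul hb' hc hl),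
    phi_mul_of_ne hb' hc hjk hz, phi_mul_of_ne ha hb (by simp [hsa, hik]) hm',
    phi_mul_of_ne hb' hc (by simp [hsc, hsa, hij]) (E_mul_T_mul ha hb hm'),
    T_braid_mul_of_ne hm ha hb hc hz hik]

theorem phi_braid_mul_of_eq_of_ne (hm : m.val = l.val + 1) (ha : posL l = a)
    (hb : posR l = b) (hc : posR m = c) (hz : 𝐞 ν * z = z)
    (hij : ν a = ν b) (hjk : ν b ≠ ν c) :
    𝛗 l * (𝛗 m * (𝛗 l * z)) = 𝛗 m * (𝛗 l * (𝛗 m * z)) := by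
  obtain ⟨hb', hsc, hsa⟩ := adjacent_positions hm ha hb hc
  have hik : ν a ≠ ν c := hij ▸ hjk
  have hl := E_mul_T_mul_of_eq ha hb hij hz
  have hm' := E_mul_T_mul hb' hc hz
  have hml := E_mul_T_mul hb' hc hl
  have lhs : 𝛗 l * (𝛗 m * (𝛗 l * z))
      = (𝐱 b - 𝐱 c) * (𝛕 l * (𝛕 m * (𝛕 l * z))) + 𝛕 l * (𝛕 m * z) := by
    rw [phi_mul_of_eq ha hb hij hz, mul_add, phi_mul_sub_X_mul hb' hc a b hl, hsa,
      Equiv.swap_apply_left, phi_mul_of_ne hb' hc hjk hl, phi_mul_of_ne hb' hc hjk hz, mul_add,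
      phi_mul_sub_X_mul ha hb a c hml, Equiv.swap_apply_left, hsc,
      phi_mul_of_ne ha hb (by simp [hsa, hik]) hml, phi_mul_of_ne ha hb (by simp [hsa, hik]) hm']
  have rhs : 𝛗 m * (𝛗 l * (𝛗 m * z))
      = (𝐱 b - 𝐱 c) * (𝛕 m * (𝛕 l * (𝛕 m * z))) + 𝛕 l * (𝛕 m * z) := by
    rw [phi_mul_of_ne hb' hc hjk hz, phi_mul_of_ne ha hb (by simp [hsa, hik]) hm',
      phi_mul_of_eq hb' hc (by simp [hsa, hsc, hij]) (E_mul_T_mul ha hb hm')]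
  rw [lhs, rhs, T_braid_mul_of_ne hm ha hb hc hz hik]

theorem phi_braid_mul_of_ne_of_eq (hm : m.val = l.val + 1) (ha : posL l = a)
    (hb : posR l = b) (hc : posR m = c) (hz : 𝐞 ν * z = z)
    (hij : ν a ≠ ν b) (hjk : ν b = ν c) :
    𝛗 l * (𝛗 m * (𝛗 l * z)) = 𝛗 m * (𝛗 l * (𝛗 m * z)) := by
  obtain ⟨hb', hsc, hsa⟩ := adjacent_positions hm ha hb hc
  have hik : ν a ≠ ν c := hjk ▸ hij
  have hl := E_mul_T_mul ha hb hz
  have hm' := E_mul_T_mul_of_eq hb' hc hjk hz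
  have hlm := E_mul_T_mul ha hb hm'
  have lhs : 𝛗 l * (𝛗 m * (𝛗 l * z))
      = (𝐱 a - 𝐱 b) * (𝛕 l * (𝛕 m * (𝛕 l * z))) + 𝛕 m * (𝛕 l * z) := by
    rw [phi_mul_of_ne ha hb hij hz, phi_mul_of_ne hb' hc (by simp [hsc, hik]) hl,
      phi_mul_of_eq ha hb (by simp [hsc, hsa, hjk]) (E_mul_T_mul hb' hc hl)]
  have rhs : 𝛗 m * (𝛗 l * (𝛗 m * z))
      = (𝐱 a - 𝐱 b) * (𝛕 m * (𝛕 l * (𝛕 m * z))) + 𝛕 m * (𝛕 l * z) := by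
    rw [phi_mul_of_eq hb' hc hjk hz, mul_add, phi_mul_sub_X_mul ha hb b c hm',
      Equiv.swap_apply_right, hsc, phi_mul_of_ne ha hb hij hm', phi_mul_of_ne ha hb hij hz, mul_add,
      phi_mul_sub_X_mul hb' hc a c hlm, hsa, Equiv.swap_apply_right,
      phi_mul_of_ne hb' hc (by simp [hsc, hik]) hlm, phi_mul_of_ne hb' hc (by simp [hsc, hik]) hl]
  rw [lhs, rhs, T_braid_mul_of_ne hm ha hb hc hz hik]

theorem phi_braid_mul_of_ne_of_outer_eq
    (hQ : Q (ν b) (ν a) = evalQ (A := Polynomial (Polynomial k)) (Q (ν a) (ν b))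
      (Polynomial.C Polynomial.X) Polynomial.X)
    (hm : m.val = l.val + 1) (ha : posL l = a) (hb : posR l = b) (hc : posR m = c)
    (hz : 𝐞 ν * z = z)
    (hij : ν a ≠ ν b) (hik : ν a = ν c) :
    𝛗 l * (𝛗 m * (𝛗 l * z)) = 𝛗 m * (𝛗 l * (𝛗 m * z)) := by
  obtain ⟨hb', hsc, hsa⟩ := adjacent_positions hm ha hb hc
  have hjk : ν b ≠ ν c := hik ▸ Ne.symm hij
  have hl := E_mul_T_mul ha hb hz
  have hm' := E_mul_T_mul hb' hc hz
  have hml := E_mul_T_mul_of_eq hb' hc (by simp [hsc, hik]) hl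
  have hlm := E_mul_T_mul_of_eq ha hb (by simp [hsa, hik]) hm'
  have lhs : 𝛗 l * (𝛗 m * (𝛗 l * z))
      = (𝐱 a - 𝐱 c) * (𝛕 l * (𝛕 m * (𝛕 l * z))) + evalQ (Q (ν a) (ν b)) (𝐱 a) (𝐱 b) * z := by
    rw [phi_mul_of_ne ha hb hij hz, phi_mul_of_eq hb' hc (by simp [hsc, hik]) hl, mul_add,
      phi_mul_sub_X_mul ha hb b c hml, Equiv.swap_apply_right, hsc,
      phi_mul_of_ne ha hb (by simp [Ne.symm hij]) hml,
      phi_mul_of_ne ha hb (by simp [Ne.symm hij]) hl,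
      T_mul_T_mul ha hb hz]
  have rhs : 𝛗 m * (𝛗 l * (𝛗 m * z))
      = (𝐱 a - 𝐱 c) * (𝛕 m * (𝛕 l * (𝛕 m * z))) + evalQ (Q (ν b) (ν c)) (𝐱 b) (𝐱 c) * z := by
    rw [phi_mul_of_ne hb' hc hjk hz, phi_mul_of_eq ha hb (by simp [hsa, hik]) hm', mul_add,
      phi_mul_sub_X_mul hb' hc a b hlm, hsa, Equiv.swap_apply_left,
      phi_mul_of_ne hb' hc (by simp [Ne.symm hjk]) hlm,
      phi_mul_of_ne hb' hc (by simp [Ne.symm hjk]) hm', T_mul_T_mul hb' hc hz]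
  have hQbar : (𝐱 a - 𝐱 c) * QbarE (Q (ν a) (ν b)) (𝐱 a) (𝐱 c) (𝐱 b)
      + evalQ (Q (ν b) (ν c)) (𝐱 b) (𝐱 c) = evalQ (Q (ν a) (ν b)) (𝐱 a) (𝐱 b) := by
    rw [sub_mul_QbarE _ (X_commute_X_s10 a c) (X_commute_X_s10 a b) (X_commute_X_s10 c b), ← hik,
      hQ, evalQ_flip _ (X_commute_X_s10 b c), sub_add_cancel]
  rw [lhs, rhs, T_braid_mul hm ha hb hc hz, if_pos hik, mul_add, add_assoc,
    ← mul_assoc _ (QbarE _ _ _ _), ← add_mul, hQbar]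

theorem phi_braid_mul_of_eq_of_eq (hQ : Q (ν a) (ν a) = 0) (hm : m.val = l.val + 1)
    (ha : posL l = a) (hb : posR l = b) (hc : posR m = c) (hz : 𝐞 ν * z = z)
    (hij : ν a = ν b) (hjk : ν b = ν c) :
    𝛗 l * (𝛗 m * (𝛗 l * z)) = 𝛗 m * (𝛗 l * (𝛗 m * z)) := by
  obtain ⟨hb', hsc, hsa⟩ := adjacent_positions hm ha hb hc
  have wD : ∀ {w} p q, 𝐞 ν * w = w → 𝐞 ν * ((𝐱 p - 𝐱 q) * w) = (𝐱 p - 𝐱 q) * w :=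
    fun p q => E_mul_mul_of_commute ((X_commute_E_s10 p ν).sub_left (X_commute_E_s10 q ν))
  have wl : ∀ {w}, 𝐞 ν * w = w → 𝐞 ν * (𝛕 l * w) = 𝛕 l * w := E_mul_T_mul_of_eq ha hb hij
  have wm : ∀ {w}, 𝐞 ν * w = w → 𝐞 ν * (𝛕 m * w) = 𝛕 m * w := E_mul_T_mul_of_eq hb' hc hjk
  have φlD : ∀ {w} p q, 𝐞 ν * w = w → 𝛗 l * ((𝐱 p - 𝐱 q) * w)
      = (𝐱 (Equiv.swap a b p) - 𝐱 (Equiv.swap a b q)) * (𝛗 l * w) := phi_mul_sub_X_mul ha hb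
  have φmD : ∀ {w} p q, 𝐞 ν * w = w → 𝛗 m * ((𝐱 p - 𝐱 q) * w)
      = (𝐱 (Equiv.swap b c p) - 𝐱 (Equiv.swap b c q)) * (𝛗 m * w) := phi_mul_sub_X_mul hb' hc
  have φlτl : ∀ {w}, 𝐞 ν * w = w → 𝛗 l * (𝛕 l * w) = 𝛕 l * w :=
    phi_mul_T_mul_of_eq ha hb hij hQ
  have φmτm : ∀ {w}, 𝐞 ν * w = w → 𝛗 m * (𝛕 m * w) = 𝛕 m * w :=
    phi_mul_T_mul_of_eq hb' hc hjk (by rwa [← hij])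
  have φlτm : ∀ {w}, 𝐞 ν * w = w →
      𝛗 l * (𝛕 m * w) = (𝐱 a - 𝐱 b) * (𝛕 l * (𝛕 m * w)) + 𝛕 m * w :=
    fun h => phi_mul_of_eq ha hb hij (wm h)
  have φmτl : ∀ {w}, 𝐞 ν * w = w →
      𝛗 m * (𝛕 l * w) = (𝐱 b - 𝐱 c) * (𝛕 m * (𝛕 l * w)) + 𝛕 l * w :=
    fun h => phi_mul_of_eq hb' hc hjk (wl h)
  -- Every intermediate term lies in `e(ν) R`; the discharger certifies this via `wD`, `wl`, `wm`.
  simp (maxDischargeDepth := 5) only [phi_mul_of_eq ha hb hij hz, phi_mul_of_eq hb' hc hjk hz,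
    mul_add, φlD, φmD, φlτl, φmτm, φlτm, φmτl, wD, wl, wm, hz, hsa, hsc, Equiv.swap_apply_left,
    Equiv.swap_apply_right]
  rw [T_braid_mul hm ha hb hc hz, if_pos (hij.trans hjk), ← hij, hQ, QbarE_zero, zero_mul,
    add_zero]
  simp only [sub_mul, mul_sub, (X_commute_X_s10 b a).left_comm, (X_commute_X_s10 c a).left_comm,
    (X_commute_X_s10 c b).left_comm]
  abel

theorem phi_braid_mul (hQdiag : ∀ i, Q i i = 0)
    (hQsymm : ∀ i j, Q i j
      = evalQ (A := Polynomial (Polynomial k)) (Q j i) (Polynomial.C Polynomial.X) Polynomial.X)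
    (hm : m.val = l.val + 1) (ha : posL l = a) (hb : posR l = b) (hc : posR m = c)
    (hz : 𝐞 ν * z = z) : 𝛗 l * (𝛗 m * (𝛗 l * z)) = 𝛗 m * (𝛗 l * (𝛗 m * z)) := by
  by_cases hij : ν a = ν b <;> by_cases hjk : ν b = ν c
  · exact phi_braid_mul_of_eq_of_eq (hQdiag _) hm ha hb hc hz hij hjk
  · exact phi_braid_mul_of_eq_of_ne hm ha hb hc hz hij hjk
  · exact phi_braid_mul_of_ne_of_eq hm ha hb hc hz hij hjk
  · by_cases hik : ν a = ν c
    · exact phi_braid_mul_of_ne_of_outer_eq (hQsymm _ _) hm ha hb hc hz hij hik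
    · exact phi_braid_mul_of_ne_of_ne_of_ne hm ha hb hc hz hij hjk hik

end Adjacent

end KLR

/-- **Braid relation for the intertwiners.**  In the KLR algebra `R(n)`, the intertwiners
satisfy `φ_a φ_{a+1} φ_a = φ_{a+1} φ_a φ_{a+1}` for `1 ≤ a ≤ n−2`. -/
theorem KLR.phi_braid
    (k I : Type) [CommRing k] [Fintype I] [DecidableEq I] (n : ℕ)
    (Q : I → I → Polynomial (Polynomial k))
    (hQdiag : ∀ i : I, Q i i = 0)
    (hQsymm : ∀ i j : I, Q i j
      = evalQ (A := Polynomial (Polynomial k)) (Q j i) (Polynomial.C Polynomial.X)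
          Polynomial.X)
    (l m : Fin (n - 1)) (hm : m.val = l.val + 1) :
    KLR.phi k I n Q l * KLR.phi k I n Q m * KLR.phi k I n Q l
      = KLR.phi k I n Q m * KLR.phi k I n Q l * KLR.phi k I n Q m := by
  rw [← mul_one (_ * _ * KLR.phi k I n Q l), ← mul_one (_ * _ * KLR.phi k I n Q m), ← KLR.sum_E,
    Finset.mul_sum, Finset.mul_sum]
  refine Finset.sum_congr rfl fun ν _ => ?_
  simp only [mul_assoc]
  exact KLR.phi_braid_mul hQdiag hQsymm hm rfl rfl rfl (by rw [KLR.E_mul_E, if_pos rfl])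
end
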